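/- Let G be a graph with a critical-set I of surplus 0 (i.e. |N(I)| = |I|), and let G' = G − N[I] with k' = k − |N(I)|. Then G has a vertex cover of size at most k if and only if G' has a vertex cover of size at most k', and moreover k' − λ(G') ≤ k − λ(G), where λ denotes the LP vertex cover optimum. -/
import Mathlib


open Finset

/-- `I` is an independent set of vertices in `G`. -/
def IsIndep {V : Type*} (G : SimpleGraph V) (I : Finset V) : Prop :=
  ∀ u ∈ I, ∀ v ∈ I, ¬ G.Adj u v

open Classical in
/-- The (open) neighborhood `N(I)` of a vertex set `I`. -/
noncomputable def nbr {V : Type*} [Fintype V] (G : SimpleGraph V) (I : Finset V) : Finset V :=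
  Finset.univ.filter (fun v => v ∉ I ∧ ∃ u ∈ I, G.Adj u v)

/-- `C` is a vertex cover of `G`. -/
def IsCover {V : Type*} (G : SimpleGraph V) (C : Finset V) : Prop :=
  ∀ u v, G.Adj u v → u ∈ C ∨ v ∈ C

/-- `C` is a vertex cover of the induced subgraph of `G` on `S`. -/
def IsCoverOn {V : Type*} (G : SimpleGraph V) (S C : Finset V) : Prop :=
  C ⊆ S ∧ ∀ u ∈ S, ∀ v ∈ S, G.Adj u v → u ∈ C ∨ v ∈ C

/-- The optimum of the fractional vertex cover LP of the induced subgraph of `G` on `S`. -/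
noncomputable def lamOn {V : Type*} (G : SimpleGraph V) (S : Finset V) : ℝ :=
  sInf {x : ℝ | ∃ θ : V → ℝ, (∀ v, 0 ≤ θ v ∧ θ v ≤ 1) ∧
    (∀ u ∈ S, ∀ v ∈ S, G.Adj u v → 1 ≤ θ u + θ v) ∧ x = ∑ v ∈ S, θ v}

lemma mem_nbr {V : Type*} [Fintype V] (G : SimpleGraph V) (I : Finset V) (v : V) :
    v ∈ nbr G I ↔ v ∉ I ∧ ∃ u ∈ I, G.Adj u v := by
  simp [nbr]

/-- Preprocessing rule (P1) for a critical-set of surplus `0`: deleting `N[I]` and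
reducing the budget by `|N(I)|` preserves feasibility and does not increase `μ = k − λ`. -/
theorem p1_surplus_zero_correct {V : Type*} [Fintype V] [DecidableEq V]
    (G : SimpleGraph V) (I : Finset V) (k : ℕ)
    (hne : I.Nonempty) (hind : IsIndep G I)
    (hcrit : ∀ J ⊆ I, J.Nonempty →
      ((nbr G I).card : ℤ) - I.card ≤ ((nbr G J).card : ℤ) - J.card)
    (hsurp : (nbr G I).card = I.card) :
    ((∃ C : Finset V, IsCover G C ∧ C.card ≤ k) ↔
      (∃ C : Finset V, IsCoverOn G (Finset.univ \ (I ∪ nbr G I)) C ∧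
        C.card + (nbr G I).card ≤ k)) ∧
    ((k : ℝ) - (nbr G I).card - lamOn G (Finset.univ \ (I ∪ nbr G I)) ≤
      (k : ℝ) - lamOn G Finset.univ) := by
  classical
  set N := nbr G I with hN
  set S := Finset.univ \ (I ∪ N) with hSdef
  have hIN : Disjoint I N := by
    rw [Finset.disjoint_left]
    intro v hv hvN
    exact ((mem_nbr G I v).mp hvN).1 hv
  -- key fact : if u ∈ I and G.Adj u v then v ∈ N
  have hadjN : ∀ u ∈ I, ∀ v, G.Adj u v → v ∈ N := by
    intro u hu v hadj
    by_cases hvI : v ∈ I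
    · exact absurd hadj (hind u hu v hvI)
    · exact (mem_nbr G I v).mpr ⟨hvI, u, hu, hadj⟩
  constructor
  · constructor
    · rintro ⟨C, hC, hCk⟩
      -- Hall's condition for the subtype of I
      have hall : ∀ s : Finset {x // x ∈ I},
          s.card ≤ (s.biUnion (fun u => Finset.univ.filter (fun v => G.Adj u.val v))).card := by
        intro s
        rcases s.eq_empty_or_nonempty with rfl | hs
        · simp
        · set J := s.image Subtype.val with hJ
          have hJI : J ⊆ I := by
            intro v hv
            rw [hJ, Finset.mem_image] at hv
            obtain ⟨u, _, rfl⟩ := hv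
            exact u.prop
          have hJcard : J.card = s.card :=
            Finset.card_image_of_injective _ Subtype.val_injective
          have h1 := hcrit J hJI (hs.image _)
          rw [hsurp] at h1
          have h2 : J.card ≤ (nbr G J).card := by omega
          have h3 : nbr G J ⊆ s.biUnion (fun u => Finset.univ.filter (fun v => G.Adj u.val v)) := by
            intro v hv
            obtain ⟨hvJ, u, huJ, hadj⟩ := (mem_nbr G J v).mp hv
            rw [hJ, Finset.mem_image] at huJ
            obtain ⟨w, hws, rfl⟩ := huJ
            exact Finset.mem_biUnion.mpr ⟨w, hws, by simpa using hadj⟩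
          calc s.card = J.card := hJcard.symm
            _ ≤ (nbr G J).card := h2
            _ ≤ _ := Finset.card_le_card h3
      obtain ⟨f, hfinj, hf⟩ :=
        (Finset.all_card_le_biUnion_card_iff_exists_injective _).mp hall
      have hfadj : ∀ u : {x // x ∈ I}, G.Adj u.val (f u) := by
        intro u
        have := hf u
        simpa using this
      have hfN : ∀ u : {x // x ∈ I}, f u ∈ N := fun u => hadjN u.val u.prop _ (hfadj u)
      set g : {x // x ∈ I} → V := fun u => if u.val ∈ C then u.val else f u with hg
      have hgC : ∀ u, g u ∈ C := by
        intro u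
        rw [hg]
        by_cases h : u.val ∈ C
        · simpa [h]
        · simp only [h, if_false]
          exact (hC _ _ (hfadj u)).resolve_left h
      have hgIN : ∀ u, g u ∈ I ∪ N := by
        intro u
        rw [hg]
        by_cases h : u.val ∈ C
        · simp only [h, if_true]; exact Finset.mem_union_left _ u.prop
        · simp only [h, if_false]; exact Finset.mem_union_right _ (hfN u)
      have hginj : Function.Injective g := by
        intro a b hab
        rw [hg] at hab
        simp only at hab
        by_cases ha : a.val ∈ C <;> by_cases hb : b.val ∈ C <;>
          simp only [ha, hb, if_true, if_false] at hab
        · exact Subtype.ext hab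
        · exact absurd (hab ▸ hfN b) (Finset.disjoint_left.mp hIN a.prop)
        · exact absurd (hab ▸ hfN a) (fun h => Finset.disjoint_left.mp hIN b.prop h)
        · exact hfinj hab
      have himg : Finset.univ.image g ⊆ C ∩ (I ∪ N) := by
        intro v hv
        rw [Finset.mem_image] at hv
        obtain ⟨u, _, rfl⟩ := hv
        exact Finset.mem_inter.mpr ⟨hgC u, hgIN u⟩
      have hIle : I.card ≤ (C ∩ (I ∪ N)).card := by
        have h1 : (Finset.univ.image g).card = I.card := by
          rw [Finset.card_image_of_injective _ hginj, Finset.card_univ, Fintype.card_coe]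
        rw [← h1]
        exact Finset.card_le_card himg
      refine ⟨C ∩ S, ⟨Finset.inter_subset_right, ?_⟩, ?_⟩
      · intro u hu v hv hadj
        rcases hC u v hadj with h | h
        · exact Or.inl (Finset.mem_inter.mpr ⟨h, hu⟩)
        · exact Or.inr (Finset.mem_inter.mpr ⟨h, hv⟩)
      · have hdisj : Disjoint (C ∩ S) (C ∩ (I ∪ N)) := by
          apply Finset.disjoint_left.mpr
          intro v hv hv'
          have h1 := (Finset.mem_inter.mp hv).2
          have h2 := (Finset.mem_inter.mp hv').2
          rw [hSdef, Finset.mem_sdiff] at h1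
          exact h1.2 h2
        have hsub : (C ∩ S) ∪ (C ∩ (I ∪ N)) ⊆ C := by
          intro v hv
          rcases Finset.mem_union.mp hv with h | h
          · exact (Finset.mem_inter.mp h).1
          · exact (Finset.mem_inter.mp h).1
        have := Finset.card_le_card hsub
        rw [Finset.card_union_of_disjoint hdisj] at this
        have : (C ∩ S).card + I.card ≤ C.card := le_trans (by omega) this
        omega
    · rintro ⟨C, ⟨hCS, hCcov⟩, hCk⟩
      refine ⟨C ∪ N, ?_, ?_⟩
      · intro u v hadj
        by_cases huI : u ∈ I
        · exact Or.inr (Finset.mem_union_right _ (hadjN u huI v hadj))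
        by_cases hvI : v ∈ I
        · exact Or.inl (Finset.mem_union_right _ (hadjN v hvI u hadj.symm))
        by_cases huN : u ∈ N
        · exact Or.inl (Finset.mem_union_right _ huN)
        by_cases hvN : v ∈ N
        · exact Or.inr (Finset.mem_union_right _ hvN)
        · have huS : u ∈ S := by
            rw [hSdef, Finset.mem_sdiff]
            exact ⟨Finset.mem_univ _, fun h => by
              rcases Finset.mem_union.mp h with h | h
              exacts [huI h, huN h]⟩
          have hvS : v ∈ S := by
            rw [hSdef, Finset.mem_sdiff]
            exact ⟨Finset.mem_univ _, fun h => by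
              rcases Finset.mem_union.mp h with h | h
              exacts [hvI h, hvN h]⟩
          rcases hCcov u huS v hvS hadj with h | h
          · exact Or.inl (Finset.mem_union_left _ h)
          · exact Or.inr (Finset.mem_union_left _ h)
      · calc (C ∪ N).card ≤ C.card + N.card := Finset.card_union_le _ _
          _ ≤ k := hCk
  · -- LP part
    set A := {x : ℝ | ∃ θ : V → ℝ, (∀ v, 0 ≤ θ v ∧ θ v ≤ 1) ∧
      (∀ u ∈ (Finset.univ : Finset V), ∀ v ∈ (Finset.univ : Finset V), G.Adj u v → 1 ≤ θ u + θ v) ∧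
      x = ∑ v ∈ (Finset.univ : Finset V), θ v} with hA
    set B := {x : ℝ | ∃ θ : V → ℝ, (∀ v, 0 ≤ θ v ∧ θ v ≤ 1) ∧
      (∀ u ∈ S, ∀ v ∈ S, G.Adj u v → 1 ≤ θ u + θ v) ∧ x = ∑ v ∈ S, θ v} with hB
    have hAbdd : BddBelow A := by
      refine ⟨0, ?_⟩
      rintro x ⟨θ, hθ01, -, rfl⟩
      exact Finset.sum_nonneg (fun v _ => (hθ01 v).1)
    have hBne : B.Nonempty := by
      refine ⟨(S.card : ℝ), fun _ => 1, fun v => ⟨zero_le_one, le_refl 1⟩,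
        fun u _ v _ _ => by norm_num, by simp⟩
    have key : ∀ b ∈ B, lamOn G (Finset.univ : Finset V) ≤ b + N.card := by
      rintro b ⟨θ, hθ01, hθcov, rfl⟩
      set θ' : V → ℝ := fun v => if v ∈ N then 1 else if v ∈ I then 0 else θ v with hθ'
      have hmem : (∑ v ∈ S, θ v) + N.card ∈ A := by
        refine ⟨θ', fun v => ?_, fun u _ v _ hadj => ?_, ?_⟩
        · rw [hθ']
          by_cases h1 : v ∈ N
          · simp [h1]
          by_cases h2 : v ∈ I
          · simp [h1, h2]
          · simp only [h1, h2, if_false]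
            exact hθ01 v
        · have hnn : ∀ w, 0 ≤ θ' w := by
            intro w
            rw [hθ']
            by_cases h1 : w ∈ N
            · simp [h1]
            by_cases h2 : w ∈ I
            · simp [h1, h2]
            · simp only [h1, h2, if_false]; exact (hθ01 w).1
          by_cases huN : u ∈ N
          · have : θ' u = 1 := by rw [hθ']; simp [huN]
            rw [this]; linarith [hnn v]
          by_cases hvN : v ∈ N
          · have : θ' v = 1 := by rw [hθ']; simp [hvN]
            rw [this]; linarith [hnn u]
          by_cases huI : u ∈ I
          · exact absurd (hadjN u huI v hadj) hvN
          by_cases hvI : v ∈ I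
          · exact absurd (hadjN v hvI u hadj.symm) huN
          · have huS : u ∈ S := by
              rw [hSdef, Finset.mem_sdiff]
              exact ⟨Finset.mem_univ _, fun h => by
                rcases Finset.mem_union.mp h with h | h
                exacts [huI h, huN h]⟩
            have hvS : v ∈ S := by
              rw [hSdef, Finset.mem_sdiff]
              exact ⟨Finset.mem_univ _, fun h => by
                rcases Finset.mem_union.mp h with h | h
                exacts [hvI h, hvN h]⟩
            have hu' : θ' u = θ u := by rw [hθ']; simp [huN, huI]
            have hv' : θ' v = θ v := by rw [hθ']; simp [hvN, hvI]
            rw [hu', hv']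
            exact hθcov u huS v hvS hadj
        · have hsplit : ∑ v ∈ S, θ' v + ∑ v ∈ (I ∪ N), θ' v = ∑ v ∈ (Finset.univ : Finset V), θ' v := by
            rw [hSdef]
            exact Finset.sum_sdiff (Finset.subset_univ _)
          have hS' : ∑ v ∈ S, θ' v = ∑ v ∈ S, θ v := by
            apply Finset.sum_congr rfl
            intro v hv
            rw [hSdef, Finset.mem_sdiff] at hv
            have hvI : v ∉ I := fun h => hv.2 (Finset.mem_union_left _ h)
            have hvN : v ∉ N := fun h => hv.2 (Finset.mem_union_right _ h)
            rw [hθ']; simp [hvI, hvN]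
          have hIN' : ∑ v ∈ (I ∪ N), θ' v = N.card := by
            rw [Finset.sum_union hIN]
            have h1 : ∑ v ∈ I, θ' v = 0 := by
              apply Finset.sum_eq_zero
              intro v hv
              have hvN : v ∉ N := Finset.disjoint_left.mp hIN hv
              rw [hθ']; simp [hvN, hv]
            have h2 : ∑ v ∈ N, θ' v = N.card := by
              have hone : ∀ v ∈ N, θ' v = 1 := fun v hv => by rw [hθ']; simp [hv]
              rw [Finset.sum_congr rfl hone, Finset.sum_const, nsmul_eq_mul, mul_one]
            rw [h1, h2, zero_add]
          rw [← hsplit, hS', hIN']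
      exact csInf_le hAbdd hmem
    have hfinal : lamOn G (Finset.univ : Finset V) - N.card ≤ lamOn G S := by
      apply le_csInf hBne
      intro b hb
      linarith [key b hb]
    have hlamS : lamOn G S = sInf B := rfl
    linarith [hfinal]
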